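/- Let k ≥ 1 and let c > 0 with ck < 1/2, and let 𝒞 be a class of finite simple graphs, closed under induced subgraphs, that is ck-good. Then every trigraph T0 in closure(𝒞^{≤k}) containing at least one strongly adjacent pair or at least one strongly antiadjacent pair admits a biclique or a complement biclique (V1, V2) with min(|V1|, |V2|) ≥ c·|V(T0)|. -/

import Mathlib

/-- A trigraph on a finite vertex set `verts` drawn from an ambient type `α`:
a symmetric adjacency function with values in {-1, 0, 1}. (Graphs are the trigraphs with
no value 0 between distinct vertices of `verts`.) -/
structure FTG (α : Type) where
  verts : Finset α
  theta : α → α → ℤ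
  symm : ∀ u v, theta u v = theta v u
  range : ∀ u v, theta u v = -1 ∨ theta u v = 0 ∨ theta u v = 1

namespace FTG

variable {α : Type} [DecidableEq α]

def StrongAdj (T : FTG α) (u v : α) : Prop :=
  u ∈ T.verts ∧ v ∈ T.verts ∧ u ≠ v ∧ T.theta u v = 1

def StrongAntiAdj (T : FTG α) (u v : α) : Prop :=
  u ∈ T.verts ∧ v ∈ T.verts ∧ u ≠ v ∧ T.theta u v = -1

def Switchable (T : FTG α) (u v : α) : Prop :=
  u ∈ T.verts ∧ v ∈ T.verts ∧ u ≠ v ∧ T.theta u v = 0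

def Adj (T : FTG α) (u v : α) : Prop :=
  u ∈ T.verts ∧ v ∈ T.verts ∧ u ≠ v ∧ 0 ≤ T.theta u v

def AntiAdj (T : FTG α) (u v : α) : Prop :=
  u ∈ T.verts ∧ v ∈ T.verts ∧ u ≠ v ∧ T.theta u v ≤ 0

/-- `T` is a (simple) graph: no switchable pair. -/
def IsGraph (T : FTG α) : Prop :=
  ∀ u v, u ∈ T.verts → v ∈ T.verts → u ≠ v → T.theta u v ≠ 0

/-- `G` is a realization of `T`: a graph on the same vertex set keeping all strong edges
and strong antiedges. -/
def IsRealization (T G : FTG α) : Prop :=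
  G.verts = T.verts ∧ G.IsGraph ∧
  ∀ u v, u ∈ T.verts → v ∈ T.verts → u ≠ v →
    (T.theta u v = 1 → G.theta u v = 1) ∧ (T.theta u v = -1 → G.theta u v = -1)

def IsClique (T : FTG α) (K : Set α) : Prop := K ⊆ ↑T.verts ∧ K.Pairwise T.Adj

def IsStable (T : FTG α) (S : Set α) : Prop := S ⊆ ↑T.verts ∧ S.Pairwise T.AntiAdj

def IsCut (T : FTG α) (c : Set α × Set α) : Prop :=
  Disjoint c.1 c.2 ∧ c.1 ∪ c.2 = ↑T.verts

def IsCSSeparator (T : FTG α) (F : Finset (Set α × Set α)) : Prop :=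
  (∀ c ∈ F, T.IsCut c) ∧
  ∀ K S : Set α, T.IsClique K → T.IsStable S → Disjoint K S →
    ∃ c ∈ F, K ⊆ c.1 ∧ S ⊆ c.2

/-- Membership in the class `𝒞^{≤k}`: the vertex set has a partition into parts of size
at most `k`, all pairs inside a part are switchable, no switchable pair crosses two parts,
and some realization belongs to `𝒞`. -/
def InCk (C : Set (FTG α)) (k : ℕ) (T : FTG α) : Prop :=
  (∃ P : Finset (Finset α),
    P.biUnion id = T.verts ∧
    (∀ p ∈ P, ∀ q ∈ P, p ≠ q → Disjoint p q) ∧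
    (∀ p ∈ P, 1 ≤ p.card ∧ p.card ≤ k) ∧
    (∀ p ∈ P, ∀ u ∈ p, ∀ v ∈ p, u ≠ v → T.theta u v = 0) ∧
    (∀ u v, u ∈ T.verts → v ∈ T.verts → u ≠ v → T.theta u v = 0 →
      ∀ p ∈ P, (u ∈ p ↔ v ∈ p))) ∧
  ∃ G ∈ C, T.IsRealization G

/-- `T` is the generalized `k`-join of `T1` and `T2`. -/
def IsGenJoin (k : ℕ) (T T1 T2 : FTG α) : Prop :=
  ∃ (r s : ℕ) (A : Fin r → Finset α) (B : Fin s → Finset α) (a : Fin r → α) (b : Fin s → α),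
    1 ≤ r ∧ r ≤ k ∧ 1 ≤ s ∧ s ≤ k ∧
    (∀ j, (A j).Nonempty) ∧ (∀ i, (B i).Nonempty) ∧
    (∀ j j', j ≠ j' → Disjoint (A j) (A j')) ∧
    (∀ i i', i ≠ i' → Disjoint (B i) (B i')) ∧
    Function.Injective a ∧ Function.Injective b ∧
    (∀ i j, b i ∉ A j) ∧ (∀ j i, a j ∉ B i) ∧
    Disjoint T1.verts T2.verts ∧
    T1.verts = Finset.univ.biUnion A ∪ Finset.univ.image b ∧
    T2.verts = Finset.univ.biUnion B ∪ Finset.univ.image a ∧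
    (∀ i i', i ≠ i' → T1.theta (b i) (b i') = 0) ∧
    (∀ j j', j ≠ j' → T2.theta (a j) (a j') = 0) ∧
    (∀ i j, ((∀ u ∈ A j, T1.theta (b i) u = 1) ∧ (∀ u ∈ B i, T2.theta (a j) u = 1)) ∨
            ((∀ u ∈ A j, T1.theta (b i) u = -1) ∧ (∀ u ∈ B i, T2.theta (a j) u = -1))) ∧
    T.verts = Finset.univ.biUnion A ∪ Finset.univ.biUnion B ∧
    (∀ u ∈ Finset.univ.biUnion A, ∀ v ∈ Finset.univ.biUnion A, T.theta u v = T1.theta u v) ∧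
    (∀ u ∈ Finset.univ.biUnion B, ∀ v ∈ Finset.univ.biUnion B, T.theta u v = T2.theta u v) ∧
    (∀ j i, ∀ u ∈ A j, ∀ v ∈ B i,
      ((∀ x ∈ A j, T1.theta (b i) x = 1) → T.theta u v = 1) ∧
      ((∀ x ∈ A j, T1.theta (b i) x = -1) → T.theta u v = -1))

/-- The closure of `𝒞^{≤k}` under generalized `k`-joins. -/
inductive InClosure (C : Set (FTG α)) (k : ℕ) : FTG α → Prop where
  | base (T : FTG α) (h : InCk C k T) : InClosure C k T
  | join (T T1 T2 : FTG α) (h1 : InClosure C k T1) (h2 : InClosure C k T2)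
      (h : IsGenJoin k T T1 T2) : InClosure C k T

/-- `𝒞` is closed under induced subgraphs. -/
def ClosedUnderInduced (C : Set (FTG α)) : Prop :=
  ∀ G ∈ C, ∀ s : Finset α, s ⊆ G.verts → FTG.mk s G.theta G.symm G.range ∈ C

/-- `𝒞` is `c`-good: every member with at least 2 vertices, with any `c`-balanced weight
function, has a biclique or a complement biclique of weight at least `c` times the total
weight. -/
def IsGood (c : ℝ) (C : Set (FTG α)) : Prop :=
  ∀ G ∈ C, 2 ≤ G.verts.card → ∀ w : α → ℕ,
    (∀ v ∈ G.verts, (w v : ℝ) ≤ c * ∑ x ∈ G.verts, (w x : ℝ)) →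
    ∃ V1 V2 : Finset α, V1 ⊆ G.verts ∧ V2 ⊆ G.verts ∧ Disjoint V1 V2 ∧
      ((∀ u ∈ V1, ∀ v ∈ V2, G.StrongAdj u v) ∨ (∀ u ∈ V1, ∀ v ∈ V2, G.StrongAntiAdj u v)) ∧
      c * (∑ x ∈ G.verts, (w x : ℝ)) ≤ min (∑ x ∈ V1, (w x : ℝ)) (∑ x ∈ V2, (w x : ℝ))

end FTG

/-!
We prove a weighted statement: if no vertex carries more than a `c`-fraction of the total
weight, some biclique or complement biclique has a `c`-fraction of the weight on each side.
Unit weights give the theorem when `c * |V(T0)| ≥ 1`; otherwise a single strong pair suffices.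

For a trigraph of `𝒞^{≤k}`, the heaviest vertex of each part represents the part in a
realization in `𝒞`. Giving it the weight of its part yields a `ck`-balanced weighting, and a
heavy biclique among the representatives loses at most a factor `k` when the other vertices of
the parts are given back their own weights. For a generalized join, if every block `B i` is
light, contracting each `B i` to its marker `b i` gives a balanced weighting of `T1`, and the
biclique found there expands back to `T`; symmetrically if every `A j` is light; and if some
`A j` and some `B i` are both heavy, they form the biclique themselves.
-/

namespace FTG

open Finset

variable {α : Type}

def IsBicliqueOrCo (T : FTG α) (V1 V2 : Finset α) : Prop :=
  (∀ u ∈ V1, ∀ v ∈ V2, T.StrongAdj u v) ∨ (∀ u ∈ V1, ∀ v ∈ V2, T.StrongAntiAdj u v)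

def IsBalanced (c : ℝ) (T : FTG α) (w : α → ℕ) : Prop :=
  ∀ v ∈ T.verts, (w v : ℝ) ≤ c * ∑ x ∈ T.verts, (w x : ℝ)

def HasHeavyBiclique (c : ℝ) (T : FTG α) (w : α → ℕ) : Prop :=
  ∃ V1 V2 : Finset α, V1 ⊆ T.verts ∧ V2 ⊆ T.verts ∧ Disjoint V1 V2 ∧ T.IsBicliqueOrCo V1 V2 ∧
    c * ∑ x ∈ T.verts, (w x : ℝ) ≤ min (∑ x ∈ V1, (w x : ℝ)) (∑ x ∈ V2, (w x : ℝ))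

def IsCollapse (T T' : FTG α) (φ : α → α) : Prop :=
  (∀ x ∈ T.verts, φ x ∈ T'.verts) ∧
  ∀ u ∈ T.verts, ∀ v ∈ T.verts, φ u ≠ φ v → T'.theta (φ u) (φ v) ≠ 0 →
    T.theta u v = T'.theta (φ u) (φ v)

def fibreWeight {β : Type} [DecidableEq β] (s : Finset α) (φ : α → β) (w : α → ℕ) (y : β) : ℕ :=
  ∑ x ∈ s with φ x = y, w x

section FibreWeight

variable {β : Type} [DecidableEq β] {s : Finset α} {φ : α → β} {w : α → ℕ}

theorem sum_fibreWeight (U : Finset β) :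
    ∑ y ∈ U, (fibreWeight s φ w y : ℝ) = ∑ x ∈ s with φ x ∈ U, (w x : ℝ) := by
  simp only [fibreWeight, Nat.cast_sum]
  exact sum_fiberwise_eq_sum_filter s U φ _

theorem sum_fibreWeight_of_mapsTo {t : Finset β} (h : ∀ x ∈ s, φ x ∈ t) :
    ∑ y ∈ t, (fibreWeight s φ w y : ℝ) = ∑ x ∈ s, (w x : ℝ) := by
  rw [sum_fibreWeight, filter_true_of_mem h]

theorem fibreWeight_le {y : β} {k : ℕ} {B : ℝ} (hB : 0 ≤ B) (hcard : #{x ∈ s | φ x = y} ≤ k)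
    (hw : ∀ x ∈ s, φ x = y → (w x : ℝ) ≤ B) : (fibreWeight s φ w y : ℝ) ≤ k * B := by
  rw [fibreWeight, Nat.cast_sum]
  calc ∑ x ∈ s with φ x = y, (w x : ℝ) ≤ #{x ∈ s | φ x = y} • B :=
        sum_le_card_nsmul _ _ _ fun x hx => hw x (mem_filter.1 hx).1 (mem_filter.1 hx).2
    _ ≤ k * B := by rw [nsmul_eq_mul]; gcongr

end FibreWeight

section Balanced

variable {c : ℝ} {T : FTG α} {w : α → ℕ}

theorem IsBalanced.mul_sum_nonneg (h : IsBalanced c T w) :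
    0 ≤ c * ∑ x ∈ T.verts, (w x : ℝ) := by
  rcases T.verts.eq_empty_or_nonempty with hV | ⟨v, hv⟩
  · simp [hV]
  · exact (Nat.cast_nonneg _).trans (h v hv)

theorem IsBalanced.sum_eq_zero {k : ℕ} (h : IsBalanced c T w) (hck : c * k < 1)
    (hcard : #T.verts ≤ k) : ∑ x ∈ T.verts, (w x : ℝ) = 0 := by
  have hW : ∑ x ∈ T.verts, (w x : ℝ) ≤ k * (c * ∑ x ∈ T.verts, (w x : ℝ)) :=
    calc ∑ x ∈ T.verts, (w x : ℝ) ≤ #T.verts • (c * ∑ x ∈ T.verts, (w x : ℝ)) :=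
          sum_le_card_nsmul _ _ _ h
      _ ≤ k * (c * ∑ x ∈ T.verts, (w x : ℝ)) := by
          rw [nsmul_eq_mul]; gcongr; exact h.mul_sum_nonneg
  have hW0 : 0 ≤ ∑ x ∈ T.verts, (w x : ℝ) := sum_nonneg fun x _ => Nat.cast_nonneg _
  nlinarith

theorem hasHeavyBiclique_of_nonpos (h : c * ∑ x ∈ T.verts, (w x : ℝ) ≤ 0) :
    HasHeavyBiclique c T w :=
  ⟨∅, ∅, empty_subset _, empty_subset _, disjoint_empty_left _, Or.inl (by simp),
    by simpa using h⟩

end Balanced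

theorem IsRealization.theta_eq {T G : FTG α} (h : T.IsRealization G) {u v : α}
    (hu : u ∈ T.verts) (hv : v ∈ T.verts) (hne : u ≠ v) (h0 : T.theta u v ≠ 0) :
    G.theta u v = T.theta u v := by
  rcases T.range u v with h1 | h1 | h1
  · rw [h1, (h.2.2 u v hu hv hne).2 h1]
  · exact absurd h1 h0
  · rw [h1, (h.2.2 u v hu hv hne).1 h1]

theorem isBicliqueOrCo_singleton {T : FTG α} {u v : α}
    (h : T.StrongAdj u v ∨ T.StrongAntiAdj u v) : T.IsBicliqueOrCo {u} {v} := by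
  rcases h with h | h <;> [left; right] <;> simpa using h

theorem IsBicliqueOrCo.comap {T T' : FTG α} {φ : α → α} {U1 U2 V1 V2 : Finset α}
    (h : T'.IsBicliqueOrCo U1 U2) (h1 : ∀ u ∈ V1, u ∈ T.verts ∧ φ u ∈ U1)
    (h2 : ∀ v ∈ V2, v ∈ T.verts ∧ φ v ∈ U2)
    (hθ : ∀ u ∈ V1, ∀ v ∈ V2, φ u ≠ φ v → T'.theta (φ u) (φ v) ≠ 0 →
      T.theta u v = T'.theta (φ u) (φ v)) :
    T.IsBicliqueOrCo V1 V2 := by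
  rcases h with h | h <;> [left; right] <;>
  · intro u hu v hv
    obtain ⟨-, -, hne, hval⟩ := h _ (h1 u hu).2 _ (h2 v hv).2
    refine ⟨(h1 u hu).1, (h2 v hv).1, fun e => hne (congrArg φ e), ?_⟩
    rw [hθ u hu v hv hne (by rw [hval]; norm_num), hval]

theorem exists_heaviest_representative (P : Finset (Finset α))
    (hP : ∀ p ∈ P, ∀ q ∈ P, p ≠ q → Disjoint p q) (hne : ∀ p ∈ P, p.Nonempty) (w : α → ℕ) :
    ∃ g : α → α, ∀ p ∈ P, ∀ x ∈ p, g x ∈ p ∧ w x ≤ w (g x) ∧ ∀ y ∈ p, g y = g x := by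
  rcases isEmpty_or_nonempty α with hα | hα
  · exact ⟨id, fun _ _ x => isEmptyElim x⟩
  have hmax : ∀ p ∈ P, ∃ m ∈ p, ∀ y ∈ p, w y ≤ w m := fun p hp => exists_max_image p w (hne p hp)
  choose! m hm hmw using hmax
  have hpart : ∀ x, ∃ p : Finset α, ∀ q ∈ P, x ∈ q → q = p := by
    intro x
    by_cases hx : ∃ p ∈ P, x ∈ p
    · obtain ⟨p, hp, hxp⟩ := hx
      exact ⟨p, fun q hq hxq => by_contra fun hqp => disjoint_left.1 (hP q hq p hp hqp) hxq hxp⟩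
    · push Not at hx
      exact ⟨∅, fun q hq hxq => absurd hxq (hx q hq)⟩
  choose part hpart using hpart
  refine ⟨fun x => m (part x), fun p hp x hx => ?_⟩
  dsimp only
  rw [← hpart x p hp hx]
  exact ⟨hm p hp, hmw p hp x hx, fun y hy => by rw [← hpart y p hp hy]⟩

variable [DecidableEq α] {C : Set (FTG α)} {k : ℕ} {c : ℝ} {T : FTG α} {w : α → ℕ}

theorem HasHeavyBiclique.of_collapse {T' : FTG α} {φ : α → α} (hφ : IsCollapse T T' φ)
    (h : HasHeavyBiclique c T' (fibreWeight T.verts φ w)) : HasHeavyBiclique c T w := by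
  obtain ⟨U1, U2, -, -, hU, hbic, hmin⟩ := h
  refine ⟨{x ∈ T.verts | φ x ∈ U1}, {x ∈ T.verts | φ x ∈ U2}, filter_subset _ _,
    filter_subset _ _, ?_, ?_, ?_⟩
  · exact disjoint_filter.2 fun x _ h1 h2 => disjoint_left.1 hU h1 h2
  · exact hbic.comap (φ := φ) (fun u hu => mem_filter.1 hu) (fun v hv => mem_filter.1 hv)
      fun u hu v hv => hφ.2 u (mem_filter.1 hu).1 v (mem_filter.1 hv).1
  · rwa [← sum_fibreWeight, ← sum_fibreWeight, ← sum_fibreWeight_of_mapsTo hφ.1]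

structure IsHeaviestRep (k : ℕ) (T : FTG α) (w : α → ℕ) (g : α → α) : Prop where
  mapsTo : ∀ x ∈ T.verts, g x ∈ T.verts
  le_weight : ∀ x ∈ T.verts, w x ≤ w (g x)
  card_fibre_le : ∀ y, #{x ∈ T.verts | g x = y} ≤ k
  theta_ne_zero : ∀ x ∈ T.verts, ∀ y ∈ T.verts, g x ≠ g y → T.theta (g x) (g y) ≠ 0

theorem exists_isHeaviestRep (P : Finset (Finset α)) (hPV : P.biUnion id = T.verts)
    (hPd : ∀ p ∈ P, ∀ q ∈ P, p ≠ q → Disjoint p q) (hPk : ∀ p ∈ P, 1 ≤ #p ∧ #p ≤ k)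
    (hPsep : ∀ u v, u ∈ T.verts → v ∈ T.verts → u ≠ v → T.theta u v = 0 →
      ∀ p ∈ P, (u ∈ p ↔ v ∈ p)) (w : α → ℕ) :
    ∃ g, IsHeaviestRep k T w g := by
  obtain ⟨g, hg⟩ := exists_heaviest_representative P hPd (fun p hp => card_pos.1 (hPk p hp).1) w
  have hpart : ∀ x ∈ T.verts, ∃ p ∈ P, x ∈ p := fun x hx => by simpa [← hPV] using hx
  have hgV : ∀ x ∈ T.verts, g x ∈ T.verts := fun x hx => by
    obtain ⟨p, hp, hxp⟩ := hpart x hx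
    exact hPV ▸ mem_biUnion.2 ⟨p, hp, (hg p hp x hxp).1⟩
  have hsame : ∀ p ∈ P, ∀ q ∈ P, ∀ y ∈ q, g y ∈ p → q = p := fun p hp q hq y hyq hgy =>
    by_contra fun hqp => disjoint_left.1 (hPd q hq p hp hqp) (hg q hq y hyq).1 hgy
  refine ⟨g, hgV, fun x hx => ?_, fun y => ?_, fun x hx y hy hne h0 => ?_⟩
  · obtain ⟨p, hp, hxp⟩ := hpart x hx
    exact (hg p hp x hxp).2.1
  · obtain ⟨x, hx⟩ | hempty := ({x ∈ T.verts | g x = y} : Finset α).eq_empty_or_nonempty.symm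
    · obtain ⟨hxT, rfl⟩ := mem_filter.1 hx
      obtain ⟨p, hp, hxp⟩ := hpart x hxT
      refine (card_le_card fun z hz => ?_).trans (hPk p hp).2
      obtain ⟨hzT, hzx⟩ := mem_filter.1 hz
      obtain ⟨q, hq, hzq⟩ := hpart z hzT
      obtain rfl := hsame p hp q hq z hzq (hzx ▸ (hg p hp x hxp).1)
      exact hzq
    · simp [hempty]
  · obtain ⟨p, hp, hxp⟩ := hpart x hx
    obtain ⟨q, hq, hyq⟩ := hpart y hy
    obtain rfl := hsame p hp q hq y hyq
      ((hPsep _ _ (hgV x hx) (hgV y hy) hne h0 p hp).1 (hg p hp x hxp).1)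
    exact hne ((hg q hq y hyq).2.2 x hxp)

theorem IsHeaviestRep.card_le {g : α → α} (hg : IsHeaviestRep k T w g) :
    #T.verts ≤ k * #(T.verts.image g) :=
  card_le_mul_card_image _ _ fun y _ => hg.card_fibre_le y

theorem IsHeaviestRep.hasHeavyBiclique {g : α → α} (hg : IsHeaviestRep k T w g) {G : FTG α}
    (hG : G ∈ C) (hreal : T.IsRealization G) (hered : ClosedUnderInduced C)
    (hgood : IsGood (c * k) C) (hk : 0 < k) (h2 : 2 ≤ #(T.verts.image g))
    (hbal : IsBalanced c T w) : HasHeavyBiclique c T w := by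
  set R := T.verts.image g
  set w' := fibreWeight T.verts g w
  have hRT : R ⊆ T.verts := fun y hy => by
    obtain ⟨x, hx, rfl⟩ := mem_image.1 hy
    exact hg.mapsTo x hx
  have hsum : ∑ y ∈ R, (w' y : ℝ) = ∑ x ∈ T.verts, (w x : ℝ) :=
    sum_fibreWeight_of_mapsTo fun x hx => mem_image_of_mem g hx
  have hbal' : IsBalanced (c * k) ⟨R, G.theta, G.symm, G.range⟩ w' := by
    intro y _
    change (w' y : ℝ) ≤ c * k * ∑ y ∈ R, (w' y : ℝ)
    rw [hsum, mul_comm c, mul_assoc]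
    exact fibreWeight_le hbal.mul_sum_nonneg (hg.card_fibre_le y) fun x hx _ => hbal x hx
  have hw' : ∀ y ∈ R, (w' y : ℝ) ≤ k * w y := fun y _ =>
    fibreWeight_le (Nat.cast_nonneg _) (hg.card_fibre_le y) fun x hx hxy => by
      rw [← hxy]; exact_mod_cast hg.le_weight x hx
  have hθ : ∀ u ∈ R, ∀ v ∈ R, u ≠ v → T.theta u v = G.theta u v := by
    intro u hu v hv hne
    obtain ⟨x, hx, rfl⟩ := mem_image.1 hu
    obtain ⟨y, hy, rfl⟩ := mem_image.1 hv
    exact (hreal.theta_eq (hg.mapsTo x hx) (hg.mapsTo y hy) hne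
      (hg.theta_ne_zero x hx y hy hne)).symm
  have hheavy : ∀ V ⊆ R, c * k * ∑ x ∈ T.verts, (w x : ℝ) ≤ ∑ x ∈ V, (w' x : ℝ) →
      c * ∑ x ∈ T.verts, (w x : ℝ) ≤ ∑ x ∈ V, (w x : ℝ) := by
    intro V hV hle
    have hkV : ∑ x ∈ V, (w' x : ℝ) ≤ k * ∑ x ∈ V, (w x : ℝ) := by
      rw [mul_sum]; exact sum_le_sum fun y hy => hw' y (hV hy)
    have hk' : (0 : ℝ) < k := by exact_mod_cast hk
    nlinarith
  obtain ⟨V1, V2, hV1, hV2, hV, hbic, hmin⟩ :=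
    hgood _ (hered G hG R (hreal.1 ▸ hRT)) h2 w' hbal'
  change c * k * ∑ y ∈ R, (w' y : ℝ) ≤ _ at hmin
  rw [hsum, le_min_iff] at hmin
  refine ⟨V1, V2, hV1.trans hRT, hV2.trans hRT, hV, ?_,
    le_min (hheavy V1 hV1 hmin.1) (hheavy V2 hV2 hmin.2)⟩
  exact IsBicliqueOrCo.comap (φ := id) hbic (fun u hu => ⟨hRT (hV1 hu), hu⟩)
    (fun v hv => ⟨hRT (hV2 hv), hv⟩) fun u hu v hv hne _ => hθ u (hV1 hu) v (hV2 hv) hne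

theorem InCk.hasHeavyBiclique (h : InCk C k T) (hk : 0 < k) (hck : c * k < 1)
    (hered : ClosedUnderInduced C) (hgood : IsGood (c * k) C) (hbal : IsBalanced c T w) :
    HasHeavyBiclique c T w := by
  obtain ⟨⟨P, hPV, hPd, hPk, -, hPsep⟩, G, hG, hreal⟩ := h
  obtain ⟨g, hg⟩ := exists_isHeaviestRep P hPV hPd hPk hPsep w
  by_cases h2 : 2 ≤ #(T.verts.image g)
  · exact hg.hasHeavyBiclique hG hreal hered hgood hk h2 hbal
  · have hcard : #T.verts ≤ k :=
      hg.card_le.trans (by simpa using Nat.mul_le_mul_left k (by omega : #(T.verts.image g) ≤ 1))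
    exact hasHeavyBiclique_of_nonpos (by rw [hbal.sum_eq_zero hck hcard, mul_zero])

theorem exists_collapse_blocks {s : ℕ} {S : Finset α} {B : Fin s → Finset α} (b : Fin s → α)
    (hBd : ∀ i i', i ≠ i' → Disjoint (B i) (B i')) (hSB : Disjoint S (univ.biUnion B)) :
    ∃ φ : α → α, (∀ x ∈ S, φ x = x) ∧ ∀ i, ∀ x ∈ B i, φ x = b i := by
  refine ⟨fun x => if h : ∃ i, x ∈ B i then b h.choose else x, fun x hx => ?_,
    fun i x hx => ?_⟩
  · have h : ¬∃ i, x ∈ B i := fun ⟨i, hi⟩ =>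
      disjoint_left.1 hSB hx (mem_biUnion.2 ⟨i, mem_univ i, hi⟩)
    simp only [dif_neg h]
  · have h : ∃ i, x ∈ B i := ⟨i, hx⟩
    simp only [dif_pos h]
    by_contra hne
    exact disjoint_left.1 (hBd _ _ fun e => hne (congrArg b e)) h.choose_spec hx

theorem isCollapse_of_blocks {T1 : FTG α} {s : ℕ} {S : Finset α} {B : Fin s → Finset α}
    {b : Fin s → α} {φ : α → α} (hφS : ∀ x ∈ S, φ x = x) (hφB : ∀ i, ∀ x ∈ B i, φ x = b i)
    (hT1 : S ∪ univ.image b ⊆ T1.verts) (hbb : ∀ i i', i ≠ i' → T1.theta (b i) (b i') = 0)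
    (hTv : T.verts = S ∪ univ.biUnion B) (hTS : ∀ u ∈ S, ∀ v ∈ S, T.theta u v = T1.theta u v)
    (hTB : ∀ i, ∀ u ∈ S, ∀ v ∈ B i, T.theta u v = T1.theta (b i) u) :
    IsCollapse T T1 φ := by
  have hcases : ∀ x ∈ T.verts, x ∈ S ∨ ∃ i, x ∈ B i := fun x hx => by simpa [hTv] using hx
  refine ⟨fun x hx => hT1 ?_, fun u hu v hv hne h0 => ?_⟩
  · rcases hcases x hx with hxS | ⟨i, hxi⟩
    · rw [hφS x hxS]; exact mem_union_left _ hxS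
    · rw [hφB i x hxi]; exact mem_union_right _ (mem_image_of_mem b (mem_univ i))
  rcases hcases u hu with huS | ⟨i, hui⟩ <;> rcases hcases v hv with hvS | ⟨i', hvi⟩
  · rw [hφS u huS, hφS v hvS, hTS u huS v hvS]
  · rw [hφS u huS, hφB i' v hvi, hTB i' u huS v hvi, T1.symm]
  · rw [hφB i u hui, hφS v hvS, T.symm, hTB i v hvS u hui]
  · rw [hφB i u hui, hφB i' v hvi] at hne h0
    exact absurd (hbb i i' fun e => hne (congrArg b e)) h0

theorem hasHeavyBiclique_of_light_blocks {T1 : FTG α} {s : ℕ}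
    {S : Finset α} {B : Fin s → Finset α} {b : Fin s → α}
    (hBd : ∀ i i', i ≠ i' → Disjoint (B i) (B i')) (hb : Function.Injective b)
    (hbS : ∀ i, b i ∉ S) (hSB : Disjoint S (univ.biUnion B))
    (hT1 : S ∪ univ.image b ⊆ T1.verts) (hbb : ∀ i i', i ≠ i' → T1.theta (b i) (b i') = 0)
    (hTv : T.verts = S ∪ univ.biUnion B) (hTS : ∀ u ∈ S, ∀ v ∈ S, T.theta u v = T1.theta u v)
    (hTB : ∀ i, ∀ u ∈ S, ∀ v ∈ B i, T.theta u v = T1.theta (b i) u)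
    (ih : ∀ w, IsBalanced c T1 w → HasHeavyBiclique c T1 w) (hbal : IsBalanced c T w)
    (hlight : ∀ i, ∑ x ∈ B i, (w x : ℝ) ≤ c * ∑ x ∈ T.verts, (w x : ℝ)) :
    HasHeavyBiclique c T w := by
  obtain ⟨φ, hφS, hφB⟩ := exists_collapse_blocks b hBd hSB
  have hφ := isCollapse_of_blocks hφS hφB hT1 hbb hTv hTS hTB
  have hcases : ∀ x ∈ T.verts, (x ∈ S ∧ φ x = x) ∨ ∃ i, x ∈ B i ∧ φ x = b i := by
    intro x hx
    rcases (by simpa [hTv] using hx : x ∈ S ∨ ∃ i, x ∈ B i) with hxS | ⟨i, hxi⟩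
    · exact Or.inl ⟨hxS, hφS x hxS⟩
    · exact Or.inr ⟨i, hxi, hφB i x hxi⟩
  refine HasHeavyBiclique.of_collapse hφ (ih _ fun y _ => ?_)
  rw [sum_fibreWeight_of_mapsTo hφ.1]
  by_cases hy : ∃ i, b i = y
  · obtain ⟨i, rfl⟩ := hy
    have hfibre : {x ∈ T.verts | φ x = b i} = B i := by
      ext x
      refine ⟨fun hx => ?_, fun hx => mem_filter.2 ⟨hTv ▸ mem_union_right _
        (mem_biUnion.2 ⟨i, mem_univ i, hx⟩), hφB i x hx⟩⟩
      obtain ⟨hxT, hφx⟩ := mem_filter.1 hx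
      rcases hcases x hxT with ⟨hxS, hφx'⟩ | ⟨i', hxi', hφx'⟩
      · exact absurd (hφx'.symm.trans hφx ▸ hxS) (hbS i)
      · rwa [hb (hφx'.symm.trans hφx)] at hxi'
    rw [fibreWeight, hfibre, Nat.cast_sum]
    exact hlight i
  · push Not at hy
    have hcard : #{x ∈ T.verts | φ x = y} ≤ 1 := by
      refine card_le_one.2 fun x hx x' hx' => ?_
      obtain ⟨hxT, hφx⟩ := mem_filter.1 hx
      obtain ⟨hx'T, hφx'⟩ := mem_filter.1 hx'
      rcases hcases x hxT with ⟨-, hx⟩ | ⟨i, -, hx⟩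
      · rcases hcases x' hx'T with ⟨-, hx'⟩ | ⟨i', -, hx'⟩
        · rw [← hx, ← hx', hφx, hφx']
        · exact absurd (hx'.symm.trans hφx') (hy i')
      · exact absurd (hx.symm.trans hφx) (hy i)
    simpa using fibreWeight_le hbal.mul_sum_nonneg hcard fun x hx _ => hbal x hx

theorem IsGenJoin.hasHeavyBiclique {T1 T2 : FTG α} (hj : IsGenJoin k T T1 T2)
    (ih1 : ∀ w, IsBalanced c T1 w → HasHeavyBiclique c T1 w)
    (ih2 : ∀ w, IsBalanced c T2 w → HasHeavyBiclique c T2 w) (hbal : IsBalanced c T w) :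
    HasHeavyBiclique c T w := by
  obtain ⟨_, _, A, B, a, b, -, -, -, -, -, -, hAd, hBd, ha, hb, hbA, haB, h12, hT1, hT2, hbb, haa,
    hor, hTv, hTA, hTB, hcross⟩ := hj
  have hAT1 : univ.biUnion A ⊆ T1.verts := hT1 ▸ subset_union_left
  have hBT2 : univ.biUnion B ⊆ T2.verts := hT2 ▸ subset_union_left
  have hAB : Disjoint (univ.biUnion A) (univ.biUnion B) := h12.mono hAT1 hBT2
  have hθ : ∀ i j, ∀ u ∈ A j, ∀ v ∈ B i,
      T.theta u v = T1.theta (b i) u ∧ T.theta v u = T2.theta (a j) v := by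
    intro i j u hu v hv
    rw [T.symm v u]
    rcases hor i j with ⟨h1, h2⟩ | ⟨h1, h2⟩
    · rw [(hcross j i u hu v hv).1 h1, h1 u hu, h2 v hv]; exact ⟨rfl, rfl⟩
    · rw [(hcross j i u hu v hv).2 h1, h1 u hu, h2 v hv]; exact ⟨rfl, rfl⟩
  by_cases hBl : ∀ i, ∑ x ∈ B i, (w x : ℝ) ≤ c * ∑ x ∈ T.verts, (w x : ℝ)
  · refine hasHeavyBiclique_of_light_blocks hBd hb (fun i hi => ?_) hAB hT1.symm.subset hbb hTv
      hTA (fun i u hu v hv => ?_) ih1 hbal hBl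
    · obtain ⟨j, -, hj⟩ := mem_biUnion.1 hi
      exact hbA i j hj
    · obtain ⟨j, -, hu⟩ := mem_biUnion.1 hu
      exact (hθ i j u hu v hv).1
  by_cases hAl : ∀ j, ∑ x ∈ A j, (w x : ℝ) ≤ c * ∑ x ∈ T.verts, (w x : ℝ)
  · refine hasHeavyBiclique_of_light_blocks hAd ha (fun j hj => ?_) hAB.symm hT2.symm.subset haa
      (hTv.trans (union_comm _ _)) hTB (fun j v hv u hu => ?_) ih2 hbal hAl
    · obtain ⟨i, -, hi⟩ := mem_biUnion.1 hj
      exact haB j i hi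
    · obtain ⟨i, -, hv⟩ := mem_biUnion.1 hv
      exact (hθ i j u hu v hv).2
  push Not at hBl hAl
  obtain ⟨i, hi⟩ := hBl
  obtain ⟨j, hj⟩ := hAl
  have hAjT : A j ⊆ T.verts := hTv ▸ (subset_biUnion_of_mem A (mem_univ j)).trans subset_union_left
  have hBiT : B i ⊆ T.verts := hTv ▸ (subset_biUnion_of_mem B (mem_univ i)).trans subset_union_right
  have hABij : Disjoint (A j) (B i) :=
    hAB.mono (subset_biUnion_of_mem A (mem_univ j)) (subset_biUnion_of_mem B (mem_univ i))
  refine ⟨A j, B i, hAjT, hBiT, hABij, ?_, le_min hj.le hi.le⟩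
  rcases hor i j with ⟨h1, -⟩ | ⟨h1, -⟩ <;> [left; right] <;>
  · intro u hu v hv
    exact ⟨hAjT hu, hBiT hv, fun e => disjoint_left.1 hABij hu (e ▸ hv),
      by rw [(hθ i j u hu v hv).1, h1 u hu]⟩

theorem InClosure.hasHeavyBiclique (hT : InClosure C k T) (hk : 0 < k)
    (hck : c * k < 1) (hered : ClosedUnderInduced C) (hgood : IsGood (c * k) C) :
    ∀ w, IsBalanced c T w → HasHeavyBiclique c T w := by
  induction hT with
  | base T h => exact fun w => h.hasHeavyBiclique hk hck hered hgood
  | join T T1 T2 _ _ hj ih1 ih2 => exact fun w => hj.hasHeavyBiclique ih1 ih2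

end FTG

theorem stmt_19_general {α : Type} [DecidableEq α] (k : ℕ) (hk : 1 ≤ k) (c : ℝ)
    (hck : c * k < 1 / 2) (C : Set (FTG α))
    (hered : FTG.ClosedUnderInduced C) (hgood : FTG.IsGood (c * k) C)
    (T0 : FTG α) (hT0 : FTG.InClosure C k T0)
    (hedge : ∃ u v, T0.StrongAdj u v ∨ T0.StrongAntiAdj u v) :
    ∃ V1 V2 : Finset α, V1 ⊆ T0.verts ∧ V2 ⊆ T0.verts ∧ Disjoint V1 V2 ∧
      ((∀ u ∈ V1, ∀ v ∈ V2, T0.StrongAdj u v) ∨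
       (∀ u ∈ V1, ∀ v ∈ V2, T0.StrongAntiAdj u v)) ∧
      c * (T0.verts.card : ℝ) ≤ (min V1.card V2.card : ℕ) := by
  by_cases hbig : 1 ≤ c * T0.verts.card
  · obtain ⟨V1, V2, h1, h2, hd, hbic, hmin⟩ :=
      hT0.hasHeavyBiclique hk (by linarith) hered hgood (fun _ => 1) fun _ _ => by simpa using hbig
    exact ⟨V1, V2, h1, h2, hd, hbic, by simpa using hmin⟩
  · obtain ⟨u, v, huv⟩ := hedge
    obtain ⟨hu, hv, hne⟩ : u ∈ T0.verts ∧ v ∈ T0.verts ∧ u ≠ v := by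
      rcases huv with h | h <;> exact ⟨h.1, h.2.1, h.2.2.1⟩
    exact ⟨{u}, {v}, Finset.singleton_subset_iff.2 hu, Finset.singleton_subset_iff.2 hv,
      Finset.disjoint_singleton.2 hne, FTG.isBicliqueOrCo_singleton huv,
      by simpa using (not_le.1 hbig).le⟩

/-- if 𝒞 is a ck-good hereditary class of graphs (k ≥ 1, 0 < c, ck < 1/2),
then every trigraph T0 of the closure of 𝒞^{≤k} under generalized k-joins containing a
strongly adjacent or strongly antiadjacent pair has a biclique or a complement biclique of
size at least c·|V(T0)|. -/
theorem stmt_19 {α : Type} [DecidableEq α] (k : ℕ) (hk : 1 ≤ k) (c : ℝ) (hc : 0 < c)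
    (hck : c * k < 1 / 2) (C : Set (FTG α)) (hgraph : ∀ G ∈ C, FTG.IsGraph G)
    (hered : FTG.ClosedUnderInduced C) (hgood : FTG.IsGood (c * k) C)
    (T0 : FTG α) (hT0 : FTG.InClosure C k T0)
    (hedge : ∃ u v, T0.StrongAdj u v ∨ T0.StrongAntiAdj u v) :
    ∃ V1 V2 : Finset α, V1 ⊆ T0.verts ∧ V2 ⊆ T0.verts ∧ Disjoint V1 V2 ∧
      ((∀ u ∈ V1, ∀ v ∈ V2, T0.StrongAdj u v) ∨
       (∀ u ∈ V1, ∀ v ∈ V2, T0.StrongAntiAdj u v)) ∧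
      c * (T0.verts.card : ℝ) ≤ (min V1.card V2.card : ℕ) :=
  stmt_19_general k hk c hck C hered hgood T0 hT0 hedge
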